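/- For every integer n ≥ 1, |Q_{4,4}(T, (4n+1)×(4n+2))| = |Q_{1,2}(T, (4n+7)×(4n+7))|. -/

import Mathlib

/-- The 16-letter alphabet 𝒜 = {A,…,P}. -/
inductive A16 : Type
  | A | B | C | D | E | F | G | H | I | J | K | L | M | N | O | P
  deriving DecidableEq

/-- The 2×2 block substitution μ on 𝒜 (rows top to bottom). -/
def mu : A16 → Fin 2 → Fin 2 → A16
  | .A => ![![.A, .F], ![.G, .C]]
  | .B => ![![.A, .F], ![.H, .D]]
  | .C => ![![.B, .E], ![.G, .C]]
  | .D => ![![.B, .E], ![.H, .D]]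
  | .E => ![![.A, .N], ![.G, .K]]
  | .F => ![![.A, .N], ![.H, .L]]
  | .G => ![![.B, .M], ![.G, .K]]
  | .H => ![![.B, .M], ![.H, .L]]
  | .I => ![![.I, .F], ![.O, .C]]
  | .J => ![![.I, .F], ![.P, .D]]
  | .K => ![![.J, .E], ![.O, .C]]
  | .L => ![![.J, .E], ![.P, .D]]
  | .M => ![![.I, .N], ![.O, .K]]
  | .N => ![![.I, .N], ![.P, .L]]
  | .O => ![![.J, .M], ![.O, .K]]
  | .P => ![![.J, .M], ![.P, .L]]

/-- Entry version of μ, indexed by arbitrary naturals (via mod 2). -/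
def muE (x : A16) (r c : ℕ) : A16 :=
  mu x ⟨r % 2, by omega⟩ ⟨c % 2, by omega⟩

/-- `superE n x` is the supertile μⁿ(x), a 2ⁿ×2ⁿ array over 𝒜,
given as a total function on ℕ × ℕ (only indices < 2ⁿ are relevant). -/
def superE : ℕ → A16 → ℕ → ℕ → A16
  | 0, x, _, _ => x
  | n + 1, x, r, c => muE (superE n x (r / 2) (c / 2)) r c

/-- The supertile T_k = μᵏ(N). -/
def Tfun (k : ℕ) : ℕ → ℕ → A16 := superE k .N

/-- An m×n pattern over the alphabet α. -/
abbrev Pat (α : Type) (m n : ℕ) := Fin m → Fin n → α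

/-- The set of m×n patterns occurring in the size×size array X. -/
def patIn {α : Type} (X : ℕ → ℕ → α) (size m n : ℕ) : Set (Pat α m n) :=
  { p | ∃ r c : ℕ, r + m ≤ size ∧ c + n ≤ size ∧
      ∀ (i : Fin m) (j : Fin n), p i j = X (r + i) (c + j) }

/-- P(T, m×n) = ⋃ₖ P(T_k, m×n). -/
def PT (m n : ℕ) : Set (Pat A16 m n) := ⋃ k : ℕ, patIn (Tfun k) (2 ^ k) m n

/-- μ applied to an m×n pattern, as a total 2m×2n array on ℕ × ℕ
(indices are reduced mod the valid range; in range this is exactly μ(p)). -/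
def muPatE {m n : ℕ} (p : Pat A16 m n) (r c : ℕ) : A16 :=
  if hm : 0 < m then
    if hn : 0 < n then
      muE (p ⟨r / 2 % m, Nat.mod_lt _ hm⟩ ⟨c / 2 % n, Nat.mod_lt _ hn⟩) r c
    else .A
  else .A

/-- μ² applied to an m×n pattern, as a total 4m×4n array on ℕ × ℕ. -/
def mu2PatE {m n : ℕ} (p : Pat A16 m n) (r c : ℕ) : A16 :=
  muE (muPatE p (r / 2) (c / 2)) r c

/-- P_{i,j}(T, m×n) = { μ(x)[i,j,m×n] : x ∈ P(T,m×n) } (1-based corner (i,j)). -/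
def Pij (i j m n : ℕ) : Set (Pat A16 m n) :=
  { q | ∃ x ∈ PT m n, ∀ (a : Fin m) (b : Fin n),
      q a b = muPatE x (i - 1 + a) (j - 1 + b) }

/-- Q_{i,j}(T, m×n) = { μ²(x)[i,j,m×n] : x ∈ P(T,m×n) } (1-based corner (i,j)). -/
def Qij (i j m n : ℕ) : Set (Pat A16 m n) :=
  { q | ∃ x ∈ PT m n, ∀ (a : Fin m) (b : Fin n),
      q a b = mu2PatE x (i - 1 + a) (j - 1 + b) }

/-- The 2×2 block substitution φ from 𝒜 to ℬ = {0,1,2,3}. -/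
def phi : A16 → Fin 2 → Fin 2 → Fin 4
  | .A => ![![0, 1], ![0, 0]]
  | .B => ![![0, 1], ![1, 1]]
  | .C => ![![1, 0], ![0, 0]]
  | .D => ![![1, 0], ![1, 1]]
  | .E => ![![0, 3], ![0, 2]]
  | .F => ![![0, 3], ![1, 3]]
  | .G => ![![1, 2], ![0, 2]]
  | .H => ![![1, 2], ![1, 3]]
  | .I => ![![2, 1], ![2, 0]]
  | .J => ![![2, 1], ![3, 1]]
  | .K => ![![3, 0], ![2, 0]]
  | .L => ![![3, 0], ![3, 1]]
  | .M => ![![2, 3], ![2, 2]]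
  | .N => ![![2, 3], ![3, 3]]
  | .O => ![![3, 2], ![2, 2]]
  | .P => ![![3, 2], ![3, 3]]

/-- Entry version of φ, indexed by arbitrary naturals (via mod 2). -/
def phiE (x : A16) (r c : ℕ) : Fin 4 :=
  phi x ⟨r % 2, by omega⟩ ⟨c % 2, by omega⟩

/-- φ applied to an m×n pattern over 𝒜, as a total 2m×2n array on ℕ × ℕ. -/
def phiPatE {m n : ℕ} (p : Pat A16 m n) (r c : ℕ) : Fin 4 :=
  if hm : 0 < m then
    if hn : 0 < n then
      phiE (p ⟨r / 2 % m, Nat.mod_lt _ hm⟩ ⟨c / 2 % n, Nat.mod_lt _ hn⟩) r c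
    else 0
  else 0

/-- φ(T_k), a 2^(k+1)×2^(k+1) array over ℬ. -/
def Sfun (k : ℕ) (r c : ℕ) : Fin 4 := phiE (Tfun k (r / 2) (c / 2)) r c

/-- P(S, m×n) = ⋃_{k≥1} P(φ(T_{k-1}), m×n). -/
def PS (m n : ℕ) : Set (Pat (Fin 4) m n) :=
  ⋃ k : ℕ, patIn (Sfun k) (2 ^ (k + 1)) m n

/-- P_{i,j}(S, m×n) = { φ(x)[i,j,m×n] : x ∈ P(T,m×n) } (1-based corner (i,j)). -/
def PSij (i j m n : ℕ) : Set (Pat (Fin 4) m n) :=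
  { q | ∃ x ∈ PT m n, ∀ (a : Fin m) (b : Fin n),
      q a b = phiPatE x (i - 1 + a) (j - 1 + b) }

/-- A_n = |P(S, n×n)|. -/
noncomputable def Acnt (n : ℕ) : ℕ := Nat.card (PS n n)

/-- a_{i,j}(n) = |P_{i,j}(T, n×n)|. -/
noncomputable def aT (i j n : ℕ) : ℕ := Nat.card (Pij i j n n)

/-- b_{i,j}(n) = |P_{i,j}(T, n×(n+1))|. -/
noncomputable def bT (i j n : ℕ) : ℕ := Nat.card (Pij i j n (n + 1))

/-- c_{i,j}(n) = |P_{i,j}(T, (n+1)×n)|. -/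
noncomputable def cT (i j n : ℕ) : ℕ := Nat.card (Pij i j (n + 1) n)


/-! Read each letter as a 4-bit number (A = 0, …, P = 15). In every supertile the letter at
(r, c) has bit 1 equal to r mod 2, bit 2 equal to (r + c) mod 2, and bits 0 and 3 equal to
functions `bit₀At r c`, `bit₃At r c` of the position alone, given by 2-adic recursions (for bit 3
only on the left half of the supertile, which costs nothing since `T_{k+3}` contains `T_k` there).

A pattern of `Q_{1,2}(T, (4n+7)×(4n+7))` is a window of some `T_{k+2}` at `(4r, 4c+1)`, and
restricting it to its subwindow at offset `(3, 2)` maps onto `Q_{4,4}(T, (4n+1)×(4n+2))`, since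
every occurrence can be enlarged. The restriction is injective: the subwindow determines r mod 2,
(r + c) mod 2 and, from its rows ≡ 3 and columns ≡ 0 mod 4, the coarse values of `bit₀At` and
`bit₃At` at `(r + i, c + j)` for `i ≤ n`; an identity between consecutive rows supplies `bit₃At`
on row `r + n + 1`, and these data determine every letter of the full window. -/

namespace A16

def bit₀ : A16 → Bool
  | .B | .D | .F | .H | .J | .L | .N | .P => true
  | _ => false

def bit₁ : A16 → Bool
  | .C | .D | .G | .H | .K | .L | .O | .P => true
  | _ => false

def bit₂ : A16 → Bool
  | .E | .F | .G | .H | .M | .N | .O | .P => true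
  | _ => false

def bit₃ : A16 → Bool
  | .I | .J | .K | .L | .M | .N | .O | .P => true
  | _ => false

instance : Fintype A16 :=
  ⟨⟨↑[A, B, C, D, E, F, G, H, I, J, K, L, M, N, O, P], by decide⟩, fun x => by cases x <;> decide⟩

theorem eq_iff_bits (x y : A16) :
    x = y ↔ x.bit₀ = y.bit₀ ∧ x.bit₁ = y.bit₁ ∧ x.bit₂ = y.bit₂ ∧ x.bit₃ = y.bit₃ := by
  revert x y; decide

end A16

theorem decide_mod_two_xor (x y : ℕ) :
    (decide (x % 2 = 1) ^^ decide (y % 2 = 1)) = decide ((x + y) % 2 = 1) := by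
  rw [Nat.add_mod]
  rcases Nat.mod_two_eq_zero_or_one x with hx | hx <;>
    rcases Nat.mod_two_eq_zero_or_one y with hy | hy <;> simp [hx, hy]

theorem muE_congr (p : A16) {r c r' c' : ℕ} (hr : r % 2 = r' % 2) (hc : c % 2 = c' % 2) :
    muE p r c = muE p r' c' := by
  simp only [muE, hr, hc]

theorem bit₀_muE (p : A16) (r c : ℕ) :
    (muE p r c).bit₀ = if r % 2 = 1 then p.bit₀ else p.bit₁ ^^ decide (c % 2 = 1) := by
  rcases Nat.mod_two_eq_zero_or_one r with hr | hr <;>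
    rcases Nat.mod_two_eq_zero_or_one c with hc | hc <;>
    simp only [muE, hr, hc] <;> cases p <;> rfl

theorem bit₁_muE (p : A16) (r c : ℕ) : (muE p r c).bit₁ = decide (r % 2 = 1) := by
  rcases Nat.mod_two_eq_zero_or_one r with hr | hr <;>
    rcases Nat.mod_two_eq_zero_or_one c with hc | hc <;>
    simp only [muE, hr, hc] <;> cases p <;> rfl

theorem bit₂_muE (p : A16) (r c : ℕ) : (muE p r c).bit₂ = decide ((r + c) % 2 = 1) := by
  rw [Nat.add_mod]
  rcases Nat.mod_two_eq_zero_or_one r with hr | hr <;>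
    rcases Nat.mod_two_eq_zero_or_one c with hc | hc <;>
    simp only [muE, hr, hc] <;> cases p <;> rfl

theorem bit₃_muE (p : A16) (r c : ℕ) :
    (muE p r c).bit₃ = if c % 2 = 1 then p.bit₂ else p.bit₃ := by
  rcases Nat.mod_two_eq_zero_or_one r with hr | hr <;>
    rcases Nat.mod_two_eq_zero_or_one c with hc | hc <;>
    simp only [muE, hr, hc] <;> cases p <;> rfl

theorem superE_mod_two_pow (k : ℕ) (x : A16) (r c : ℕ) :
    superE k x r c = superE k x (r % 2 ^ k) (c % 2 ^ k) := by
  induction k generalizing r c with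
  | zero => rfl
  | succ k ih =>
    have hdvd : 2 ∣ 2 ^ k * 2 := dvd_mul_left 2 _
    simp only [superE, pow_succ, Nat.mod_mul_left_div_self, ← ih]
    exact muE_congr _ (Nat.mod_mod_of_dvd r hdvd).symm (Nat.mod_mod_of_dvd c hdvd).symm

theorem superE_add (a b : ℕ) (x : A16) (r c : ℕ) :
    superE (a + b) x r c = superE b (superE a x (r / 2 ^ b) (c / 2 ^ b)) r c := by
  induction b generalizing r c with
  | zero => simp [superE]
  | succ b ih =>
    rw [← add_assoc]
    simp only [superE, ih, Nat.div_div_eq_div_mul, pow_succ']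

theorem Tfun_add_three_block {k r c : ℕ} (hr : r < 2 ^ k) (hc : c < 2 ^ k) :
    Tfun (k + 3) r (c + 3 * 2 ^ k) = Tfun k r c := by
  have hcorner : superE 3 .N 0 3 = .N := rfl
  rw [Tfun, add_comm, superE_add, Nat.div_eq_of_lt hr, Nat.add_mul_div_right _ _ (by positivity),
    Nat.div_eq_of_lt hc, zero_add, hcorner, superE_mod_two_pow, Nat.add_mul_mod_self_right,
    Nat.mod_eq_of_lt hr, Nat.mod_eq_of_lt hc]
  rfl

def bit₀At (r c : ℕ) : Bool :=
  if h : r % 2 = 0 then decide ((r / 2 + c) % 2 = 1) else bit₀At (r / 2) (c / 2)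
  decreasing_by omega

def bit₃At (r c : ℕ) : Bool :=
  if c % 2 = 1 then decide ((r / 2 + c / 2) % 2 = 1)
  else if h : c = 0 then true else bit₃At (r / 2) (c / 2)
  decreasing_by omega

theorem bit₀At_of_even {r : ℕ} (c : ℕ) (h : r % 2 = 0) :
    bit₀At r c = decide ((r / 2 + c) % 2 = 1) := by
  rw [bit₀At, dif_pos h]

theorem bit₀At_of_odd {r : ℕ} (c : ℕ) (h : r % 2 = 1) :
    bit₀At r c = bit₀At (r / 2) (c / 2) := by
  rw [bit₀At, dif_neg (by omega)]

theorem bit₃At_of_odd (r : ℕ) {c : ℕ} (h : c % 2 = 1) :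
    bit₃At r c = decide ((r / 2 + c / 2) % 2 = 1) := by
  rw [bit₃At, if_pos h]

theorem bit₃At_of_even (r : ℕ) {c : ℕ} (h : c % 2 = 0) :
    bit₃At r c = bit₃At (r / 2) (c / 2) := by
  rcases Nat.eq_zero_or_pos c with rfl | hc
  · simp [bit₃At]
  · rw [bit₃At, if_neg (by omega), dif_neg (by omega)]

theorem bit₀At_four_mul_add_one (r c : ℕ) :
    bit₀At (4 * r + 1) c = decide ((r + c / 2) % 2 = 1) := by
  rw [bit₀At_of_odd _ (by omega), bit₀At_of_even _ (by omega)]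
  congr 3; omega

theorem bit₀At_four_mul_add_three (r c : ℕ) : bit₀At (4 * r + 3) c = bit₀At r (c / 4) := by
  rw [bit₀At_of_odd _ (by omega), bit₀At_of_odd _ (by omega)]
  congr 1 <;> omega

theorem bit₃At_four_mul_add_two (r c : ℕ) :
    bit₃At r (4 * c + 2) = decide ((r / 4 + c) % 2 = 1) := by
  rw [bit₃At_of_even _ (by omega), bit₃At_of_odd _ (by omega)]
  congr 3; omega

theorem bit₃At_four_mul (r c : ℕ) : bit₃At r (4 * c) = bit₃At (r / 4) c := by
  rw [bit₃At_of_even _ (by omega), bit₃At_of_even _ (by omega)]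
  congr 1 <;> omega

theorem bit₃At_succ_succ (r c : ℕ) :
    bit₃At (r + 1) (c + 1) = !(bit₃At r (c + 1) ^^ bit₀At r (c + 1) ^^ bit₀At r c) := by
  induction c using Nat.strong_induction_on generalizing r with
  | _ c ih =>
  rcases Nat.mod_two_eq_zero_or_one r with hr | hr
  · have hcol : (bit₀At r (c + 1) ^^ bit₀At r c) = true := by
      rw [bit₀At_of_even _ hr, bit₀At_of_even _ hr, decide_mod_two_xor, decide_eq_true_iff]
      omega
    have hrow : bit₃At (r + 1) (c + 1) = bit₃At r (c + 1) := by
      rcases Nat.mod_two_eq_zero_or_one (c + 1) with hc | hc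
      · rw [bit₃At_of_even _ hc, bit₃At_of_even _ hc, show (r + 1) / 2 = r / 2 by omega]
      · rw [bit₃At_of_odd _ hc, bit₃At_of_odd _ hc, show (r + 1) / 2 = r / 2 by omega]
    rw [Bool.xor_assoc, hcol, hrow, Bool.xor_true, Bool.not_not]
  · rw [bit₀At_of_odd _ hr, bit₀At_of_odd _ hr]
    rcases Nat.mod_two_eq_zero_or_one c with hc | hc
    · have hc' : (c + 1) % 2 = 1 := by omega
      rw [bit₃At_of_odd _ hc', bit₃At_of_odd _ hc', show (c + 1) / 2 = c / 2 by omega,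
        Bool.xor_assoc, Bool.xor_self, Bool.xor_false, ← decide_not, decide_eq_decide]
      omega
    · have hc' : (c + 1) % 2 = 0 := by omega
      rw [bit₃At_of_even _ hc', bit₃At_of_even _ hc', show (r + 1) / 2 = r / 2 + 1 by omega,
        show (c + 1) / 2 = c / 2 + 1 by omega, ih (c / 2) (by omega)]

theorem bit₀At_four_mul_add_congr {r c r' c' : ℕ} (u v : ℕ) (hr : r % 2 = r' % 2)
    (hcoarse : u % 4 = 3 → bit₀At (r + u / 4) (c + v / 4) = bit₀At (r' + u / 4) (c' + v / 4)) :
    bit₀At (4 * r + u) (4 * c + v) = bit₀At (4 * r' + u) (4 * c' + v) := by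
  rcases (by omega : u % 2 = 0 ∨ u % 4 = 1 ∨ u % 4 = 3) with hu | hu | hu
  · rw [bit₀At_of_even _ (by omega), bit₀At_of_even _ (by omega), decide_eq_decide]
    omega
  · rw [show 4 * r + u = 4 * (r + u / 4) + 1 by omega,
      show 4 * r' + u = 4 * (r' + u / 4) + 1 by omega,
      bit₀At_four_mul_add_one, bit₀At_four_mul_add_one, decide_eq_decide]
    omega
  · rw [show 4 * r + u = 4 * (r + u / 4) + 3 by omega,
      show 4 * r' + u = 4 * (r' + u / 4) + 3 by omega,
      bit₀At_four_mul_add_three, bit₀At_four_mul_add_three,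
      show (4 * c + v) / 4 = c + v / 4 by omega, show (4 * c' + v) / 4 = c' + v / 4 by omega]
    exact hcoarse hu

theorem bit₃At_four_mul_add_congr {r c r' c' : ℕ} (u v : ℕ) (hrc : (r + c) % 2 = (r' + c') % 2)
    (hcoarse : v % 4 = 0 → bit₃At (r + u / 4) (c + v / 4) = bit₃At (r' + u / 4) (c' + v / 4)) :
    bit₃At (4 * r + u) (4 * c + v) = bit₃At (4 * r' + u) (4 * c' + v) := by
  rcases (by omega : v % 2 = 1 ∨ v % 4 = 2 ∨ v % 4 = 0) with hv | hv | hv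
  · rw [bit₃At_of_odd _ (by omega), bit₃At_of_odd _ (by omega), decide_eq_decide]
    omega
  · rw [show 4 * c + v = 4 * (c + v / 4) + 2 by omega,
      show 4 * c' + v = 4 * (c' + v / 4) + 2 by omega,
      bit₃At_four_mul_add_two, bit₃At_four_mul_add_two, decide_eq_decide]
    omega
  · rw [show 4 * c + v = 4 * (c + v / 4) by omega, show 4 * c' + v = 4 * (c' + v / 4) by omega,
      bit₃At_four_mul, bit₃At_four_mul, show (4 * r + u) / 4 = r + u / 4 by omega,
      show (4 * r' + u) / 4 = r' + u / 4 by omega]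
    exact hcoarse hv

theorem Tfun_succ (k r c : ℕ) : Tfun (k + 1) r c = muE (Tfun k (r / 2) (c / 2)) r c := rfl

theorem bit₁_Tfun_succ (k r c : ℕ) : (Tfun (k + 1) r c).bit₁ = decide (r % 2 = 1) := by
  rw [Tfun_succ, bit₁_muE]

theorem bit₂_Tfun_succ (k r c : ℕ) : (Tfun (k + 1) r c).bit₂ = decide ((r + c) % 2 = 1) := by
  rw [Tfun_succ, bit₂_muE]

/-- The bound excludes the bottom row, whose recursion reaches the seed `N` instead of a row of
even index. -/
theorem bit₀_Tfun_succ {k r : ℕ} (c : ℕ) (hr : r + 2 ≤ 2 ^ (k + 1)) :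
    (Tfun (k + 1) r c).bit₀ = bit₀At r c := by
  induction k generalizing r c with
  | zero =>
    obtain rfl : r = 0 := by simp at hr; omega
    simp [bit₀_muE, bit₀At_of_even, Tfun, superE, A16.bit₁]
  | succ k ih =>
    rw [Tfun_succ, bit₀_muE]
    rcases Nat.mod_two_eq_zero_or_one r with h | h
    · rw [if_neg (by omega), bit₁_Tfun_succ, decide_mod_two_xor, bit₀At_of_even _ h]
    · rw [if_pos h, ih _ (by rw [pow_succ] at hr; omega), bit₀At_of_odd _ h]

theorem bit₃_Tfun_add_two {k : ℕ} (r : ℕ) {c : ℕ} (hc : c < 2 ^ (k + 1)) :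
    (Tfun (k + 2) r c).bit₃ = bit₃At r c := by
  induction k generalizing r c with
  | zero =>
    rw [Tfun_succ, bit₃_muE]
    rcases Nat.mod_two_eq_zero_or_one c with h | h
    · obtain rfl : c = 0 := by simp at hc; omega
      rw [if_neg (by omega), Tfun_succ, bit₃_muE, if_neg (by omega), bit₃At]
      rfl
    · rw [if_pos h, bit₂_Tfun_succ, bit₃At_of_odd _ h]
  | succ k ih =>
    rw [Tfun_succ, bit₃_muE]
    rcases Nat.mod_two_eq_zero_or_one c with h | h
    · rw [if_neg (by omega), ih _ (by rw [pow_succ] at hc; omega), bit₃At_of_even _ h]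
    · rw [if_pos h, bit₂_Tfun_succ, bit₃At_of_odd _ h]

theorem Tfun_add_two_eq_iff {k k' r c r' c' : ℕ} (hr : r + 2 ≤ 2 ^ (k + 2))
    (hc : c < 2 ^ (k + 1)) (hr' : r' + 2 ≤ 2 ^ (k' + 2)) (hc' : c' < 2 ^ (k' + 1)) :
    Tfun (k + 2) r c = Tfun (k' + 2) r' c' ↔
      r % 2 = r' % 2 ∧ (r + c) % 2 = (r' + c') % 2 ∧
        bit₀At r c = bit₀At r' c' ∧ bit₃At r c = bit₃At r' c' := by
  have hrow : decide (r % 2 = 1) = decide (r' % 2 = 1) ↔ r % 2 = r' % 2 := by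
    rw [decide_eq_decide]; omega
  have hdiag : decide ((r + c) % 2 = 1) = decide ((r' + c') % 2 = 1) ↔
      (r + c) % 2 = (r' + c') % 2 := by
    rw [decide_eq_decide]; omega
  rw [A16.eq_iff_bits, bit₀_Tfun_succ _ hr, bit₀_Tfun_succ _ hr', bit₁_Tfun_succ, bit₁_Tfun_succ,
    bit₂_Tfun_succ, bit₂_Tfun_succ, bit₃_Tfun_add_two _ hc, bit₃_Tfun_add_two _ hc', hrow, hdiag]
  tauto

def InnerAgree (f : ℕ → ℕ → Bool) (n r c r' c' : ℕ) : Prop :=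
  ∀ a < 4 * n + 1, ∀ b < 4 * n + 2,
    f (4 * r + 3 + a) (4 * c + 3 + b) = f (4 * r' + 3 + a) (4 * c' + 3 + b)

section InnerAgree

variable {n r c r' c' : ℕ}

theorem bit₀At_coarse_eq (h₀ : InnerAgree bit₀At n r c r' c') {i j : ℕ} (hi : i ≤ n)
    (hj : j ≤ n + 1) : bit₀At (r + i) (c + j) = bit₀At (r' + i) (c' + j) := by
  have h := h₀ (4 * i) (by omega) (4 * j - 3) (by omega)
  rwa [show 4 * r + 3 + 4 * i = 4 * (r + i) + 3 by ring,
    show 4 * r' + 3 + 4 * i = 4 * (r' + i) + 3 by ring,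
    bit₀At_four_mul_add_three, bit₀At_four_mul_add_three,
    show (4 * c + 3 + (4 * j - 3)) / 4 = c + j by omega,
    show (4 * c' + 3 + (4 * j - 3)) / 4 = c' + j by omega] at h

theorem bit₃At_coarse_eq (h₃ : InnerAgree bit₃At n r c r' c') {i j : ℕ} (hi : i ≤ n)
    (hj₁ : 1 ≤ j) (hj : j ≤ n + 1) : bit₃At (r + i) (c + j) = bit₃At (r' + i) (c' + j) := by
  have h := h₃ (4 * i) (by omega) (4 * j - 3) (by omega)
  rwa [show 4 * c + 3 + (4 * j - 3) = 4 * (c + j) by omega,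
    show 4 * c' + 3 + (4 * j - 3) = 4 * (c' + j) by omega,
    bit₃At_four_mul, bit₃At_four_mul, show (4 * r + 3 + 4 * i) / 4 = r + i by omega,
    show (4 * r' + 3 + 4 * i) / 4 = r' + i by omega] at h

theorem bit₃At_coarse_eq_next_row (h₀ : InnerAgree bit₀At n r c r' c')
    (h₃ : InnerAgree bit₃At n r c r' c') {j : ℕ} (hj : j ≤ n) :
    bit₃At (r + n + 1) (c + j + 1) = bit₃At (r' + n + 1) (c' + j + 1) := by
  rw [bit₃At_succ_succ, bit₃At_succ_succ, bit₀At_coarse_eq h₀ le_rfl (by omega), add_assoc c,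
    add_assoc c', bit₀At_coarse_eq h₀ le_rfl (by omega),
    bit₃At_coarse_eq h₃ le_rfl (by omega) (by omega)]

theorem mod_two_eq_of_innerAgree (hn : 1 ≤ n) (h₀ : InnerAgree bit₀At n r c r' c') :
    r % 2 = r' % 2 := by
  have h := h₀ 2 (by omega) 0 (by omega)
  rw [show 4 * r + 3 + 2 = 4 * (r + 1) + 1 by ring,
    show 4 * r' + 3 + 2 = 4 * (r' + 1) + 1 by ring,
    bit₀At_four_mul_add_one, bit₀At_four_mul_add_one, decide_eq_decide] at h
  omega

theorem add_mod_two_eq_of_innerAgree (hn : 1 ≤ n) (h₃ : InnerAgree bit₃At n r c r' c') :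
    (r + c) % 2 = (r' + c') % 2 := by
  have h := h₃ 0 (by omega) 3 (by omega)
  rw [show 4 * c + 3 + 3 = 4 * (c + 1) + 2 by ring,
    show 4 * c' + 3 + 3 = 4 * (c' + 1) + 2 by ring,
    bit₃At_four_mul_add_two, bit₃At_four_mul_add_two, decide_eq_decide] at h
  omega

theorem bitsAt_eq_of_innerAgree (hn : 1 ≤ n) (h₀ : InnerAgree bit₀At n r c r' c')
    (h₃ : InnerAgree bit₃At n r c r' c') {a b : ℕ} (ha : a < 4 * n + 7) (hb : b < 4 * n + 7) :
    bit₀At (4 * r + a) (4 * c + 1 + b) = bit₀At (4 * r' + a) (4 * c' + 1 + b) ∧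
      bit₃At (4 * r + a) (4 * c + 1 + b) = bit₃At (4 * r' + a) (4 * c' + 1 + b) := by
  rw [add_assoc _ 1, add_assoc _ 1]
  constructor
  · exact bit₀At_four_mul_add_congr a (1 + b) (mod_two_eq_of_innerAgree hn h₀)
      fun _ => bit₀At_coarse_eq h₀ (by omega) (by omega)
  · refine bit₃At_four_mul_add_congr a (1 + b) (add_mod_two_eq_of_innerAgree hn h₃) fun _ => ?_
    rcases (by omega : a / 4 ≤ n ∨ a / 4 = n + 1) with hi | hi
    · exact bit₃At_coarse_eq h₃ hi (by omega) (by omega)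
    · rw [hi, ← add_assoc, ← add_assoc, show (1 + b) / 4 = (1 + b) / 4 - 1 + 1 by omega,
        ← add_assoc, ← add_assoc]
      exact bit₃At_coarse_eq_next_row h₀ h₃ (by omega)

end InnerAgree

def window (k r c m n : ℕ) : Pat A16 m n := fun a b => Tfun k (r + a) (c + b)

theorem window_eq_window_iff {k k' r c r' c' m n : ℕ} :
    window k r c m n = window k' r' c' m n ↔
      ∀ a < m, ∀ b < n, Tfun k (r + a) (c + b) = Tfun k' (r' + a) (c' + b) := by
  simp [funext_iff, window, Fin.forall_iff]

theorem window_add_three {k r c m n : ℕ} (hr : r + m ≤ 2 ^ k) (hc : c + n ≤ 2 ^ k) :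
    window (k + 3) r (c + 3 * 2 ^ k) m n = window k r c m n := by
  funext a b
  rw [window, window, add_right_comm, Tfun_add_three_block (by omega) (by omega)]

theorem mem_PT_iff {m n : ℕ} {x : Pat A16 m n} :
    x ∈ PT m n ↔ ∃ k r c, r + m ≤ 2 ^ k ∧ c + n ≤ 2 ^ k ∧ x = window k r c m n := by
  simp [PT, patIn, funext_iff, window]

theorem mu2PatE_window {k r c m n u v : ℕ} (hu : u / 4 < m) (hv : v / 4 < n) :
    mu2PatE (window k r c m n) u v = Tfun (k + 2) (4 * r + u) (4 * c + v) := by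
  have hm : 0 < m := by omega
  have hn : 0 < n := by omega
  simp only [mu2PatE, muPatE, dif_pos hm, dif_pos hn, window, Tfun_succ]
  rw [show u / 2 / 2 = u / 4 by omega, show v / 2 / 2 = v / 4 by omega, Nat.mod_eq_of_lt hu,
    Nat.mod_eq_of_lt hv, show (4 * r + u) / 2 / 2 = r + u / 4 by omega,
    show (4 * c + v) / 2 / 2 = c + v / 4 by omega,
    muE_congr _ (r := u / 2) (r' := (4 * r + u) / 2) (c := v / 2) (c' := (4 * c + v) / 2)
      (by omega) (by omega)]
  exact muE_congr _ (by omega) (by omega)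

theorem mem_Qij_iff {i j m n : ℕ} (hi : i < 4) (hj : j < 4) {q : Pat A16 m n} :
    q ∈ Qij (i + 1) (j + 1) m n ↔
      ∃ k r c, r + m ≤ 2 ^ k ∧ c + n ≤ 2 ^ k ∧ q = window (k + 2) (4 * r + i) (4 * c + j) m n := by
  simp only [Qij, Nat.add_sub_cancel, Set.mem_ofPred_eq, mem_PT_iff]
  constructor
  · rintro ⟨_, ⟨k, r, c, hr, hc, rfl⟩, hq⟩
    refine ⟨k, r, c, hr, hc, funext₂ fun a b => ?_⟩
    rw [hq, mu2PatE_window (by omega) (by omega), window, add_assoc, add_assoc]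
  · rintro ⟨k, r, c, hr, hc, rfl⟩
    refine ⟨_, ⟨k, r, c, hr, hc, rfl⟩, fun a b => ?_⟩
    rw [mu2PatE_window (by omega) (by omega), window, add_assoc, add_assoc]

/-- `bit₃_Tfun_add_two` needs the window in the left half of its supertile. -/
theorem exists_left_window_of_mem_Qij {i j m n : ℕ} (hi : i < 4) (hj : j < 4) (hm : 0 < m)
    (hn : 0 < n) {q : Pat A16 m n} (hq : q ∈ Qij (i + 1) (j + 1) m n) :
    ∃ k r c, r + m ≤ 2 ^ k ∧ 2 * (c + n) ≤ 2 ^ k ∧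
      q = window (k + 2) (4 * r + i) (4 * c + j) m n := by
  obtain ⟨k, r, c, hr, hc, rfl⟩ := (mem_Qij_iff hi hj).1 hq
  have hpow : 2 ^ (k + 2) = 4 * 2 ^ k := by ring
  refine ⟨k + 3, r, c + 3 * 2 ^ k, by rw [pow_add]; omega, by rw [pow_add]; omega, ?_⟩
  rw [show 4 * (c + 3 * 2 ^ k) + j = 4 * c + j + 3 * 2 ^ (k + 2) by rw [hpow]; ring,
    show k + 3 + 2 = k + 2 + 3 by ring, window_add_three (by omega) (by omega)]

def restrictPat (n : ℕ) (q : Pat A16 (4 * n + 7) (4 * n + 7)) : Pat A16 (4 * n + 1) (4 * n + 2) :=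
  fun a b => q ⟨3 + a, by omega⟩ ⟨2 + b, by omega⟩

theorem restrictPat_window (n k r c : ℕ) :
    restrictPat n (window k r c (4 * n + 7) (4 * n + 7)) =
      window k (r + 3) (c + 2) (4 * n + 1) (4 * n + 2) := by
  funext a b
  simp only [restrictPat, window, add_assoc]

theorem mapsTo_restrictPat (n : ℕ) :
    Set.MapsTo (restrictPat n) (Qij 1 2 (4 * n + 7) (4 * n + 7))
      (Qij 4 4 (4 * n + 1) (4 * n + 2)) := by
  intro q hq
  obtain ⟨k, r, c, hr, hc, rfl⟩ :=
    (mem_Qij_iff (i := 0) (j := 1) (by norm_num) (by norm_num)).1 hq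
  rw [restrictPat_window]
  exact (mem_Qij_iff (i := 3) (j := 3) (by norm_num) (by norm_num)).2
    ⟨k, r, c, by omega, by omega, rfl⟩

theorem surjOn_restrictPat (n : ℕ) :
    Set.SurjOn (restrictPat n) (Qij 1 2 (4 * n + 7) (4 * n + 7))
      (Qij 4 4 (4 * n + 1) (4 * n + 2)) := by
  intro q hq
  obtain ⟨k, r, c, hr, hc, rfl⟩ :=
    (mem_Qij_iff (i := 3) (j := 3) (by norm_num) (by norm_num)).1 hq
  have hpow : 2 ^ (k + 2) = 4 * 2 ^ k := by ring
  refine ⟨window (k + 3 + 2) (4 * r) (4 * (c + 3 * 2 ^ k) + 1) (4 * n + 7) (4 * n + 7),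
    (mem_Qij_iff (i := 0) (j := 1) (by norm_num) (by norm_num)).2
      ⟨k + 3, r, c + 3 * 2 ^ k, by rw [pow_add]; omega, by rw [pow_add]; omega, rfl⟩, ?_⟩
  rw [restrictPat_window,
    show 4 * (c + 3 * 2 ^ k) + 1 + 2 = 4 * c + 3 + 3 * 2 ^ (k + 2) by rw [hpow]; ring,
    show k + 3 + 2 = k + 2 + 3 by ring, window_add_three (by omega) (by omega)]

theorem injOn_restrictPat {n : ℕ} (hn : 1 ≤ n) :
    Set.InjOn (restrictPat n) (Qij 1 2 (4 * n + 7) (4 * n + 7)) := by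
  intro q hq q' hq' heq
  obtain ⟨k, r, c, hr, hc, rfl⟩ := exists_left_window_of_mem_Qij (i := 0) (j := 1)
    (by norm_num) (by norm_num) (by omega) (by omega) hq
  obtain ⟨k', r', c', hr', hc', rfl⟩ := exists_left_window_of_mem_Qij (i := 0) (j := 1)
    (by norm_num) (by norm_num) (by omega) (by omega) hq'
  have hpow : 2 ^ (k + 2) = 4 * 2 ^ k ∧ 2 ^ (k + 1) = 2 * 2 ^ k := by constructor <;> ring
  have hpow' : 2 ^ (k' + 2) = 4 * 2 ^ k' ∧ 2 ^ (k' + 1) = 2 * 2 ^ k' := by constructor <;> ring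
  rw [restrictPat_window, restrictPat_window, window_eq_window_iff] at heq
  have hinner := fun a (ha : a < 4 * n + 1) b (hb : b < 4 * n + 2) =>
    (Tfun_add_two_eq_iff (by omega) (by omega) (by omega) (by omega)).1 (heq a ha b hb)
  rw [window_eq_window_iff]
  intro a ha b hb
  obtain ⟨h₀, h₃⟩ := bitsAt_eq_of_innerAgree hn (fun a ha b hb => (hinner a ha b hb).2.2.1)
    (fun a ha b hb => (hinner a ha b hb).2.2.2) ha hb
  exact (Tfun_add_two_eq_iff (by omega) (by omega) (by omega) (by omega)).2
    ⟨by omega, by omega, h₀, h₃⟩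

/-- Lemma 4.5: |Q_{4,4}(T, (4n+1)×(4n+2))| = |Q_{1,2}(T, (4n+7)×(4n+7))|. -/
theorem Q_extension (n : ℕ) (hn : 1 ≤ n) :
    Nat.card (Qij 4 4 (4 * n + 1) (4 * n + 2)) =
      Nat.card (Qij 1 2 (4 * n + 7) (4 * n + 7)) :=
  (Nat.card_congr (Set.BijOn.equiv _
    ⟨mapsTo_restrictPat n, injOn_restrictPat hn, surjOn_restrictPat n⟩)).symm
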